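/- Let ℓ ≥ 3 be an odd integer and let v ∈ C be a primitive ℓ-th root of unity. Then the function q ↦ (−1)^ℓ · ( [ℓ]_q!! · [ℓ−2]_q!! )² / ( [2ℓ−1]_q!! · [2ℓ]_q!! ), defined for complex q near v with q ≠ v (the denominator is nonvanishing on some punctured neighborhood of v), tends to −1/2 as q → v with q ≠ v. (This evaluation occurs in the proof of Proposition 7.5 of the paper.) -/

import Mathlib

/-!
Write `ℓ = 2k + 1`. Since `[ℓ]!! = [ℓ] [ℓ-2]!!`, `[2ℓ-1]!! = U [ℓ] [ℓ-2]!!` and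
`[2ℓ]!! = [2ℓ] C E` with `[2ℓ] = [ℓ] (q^ℓ + q^{-ℓ})`, the factor `[ℓ]² [ℓ-2]!!` cancels and the
ratio becomes `-A³ / (U E C (q^ℓ + q^{-ℓ}))`, where `A = [1][3]⋯[2k-1] = [ℓ-2]!!`,
`E = [2][4]⋯[2k]`, `U = [ℓ+2]⋯[2ℓ-1]` and `C = [ℓ+1]⋯[2ℓ-2]`. This holds wherever `[ℓ]!! ≠ 0`,
hence on a punctured neighbourhood of `v`, since every zero of `[m]_q` is a `2m`-th root of
unity. Only `[ℓ]` vanishes at `v`, so the reduced expression is continuous there. At `v` we have `[ℓ+j] = [j]` and `[ℓ-j] = -[j]`, hence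
`U = E = (-1)^k A`, `C = A` and `v^ℓ + v^{-ℓ} = 2`, and the value is `-1/2`.
-/

open Filter Topology

/-- The quantum integer `[m]_q = (q^m - q^{-m})/(q - q^{-1})`. -/
noncomputable def qInt (q : ℂ) (m : ℕ) : ℂ := (q ^ m - q⁻¹ ^ m) / (q - q⁻¹)

/-- The quantum double factorial `[m]_q!! = ∏_{r=0}^{⌈m/2⌉-1} [m-2r]_q`. -/
noncomputable def qDFact (q : ℂ) (m : ℕ) : ℂ :=
  ∏ r ∈ Finset.range ((m + 1) / 2), qInt q (m - 2 * r)

open Finset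

lemma qInt_two_mul (q : ℂ) (m : ℕ) : qInt q (2 * m) = qInt q m * (q ^ m + q⁻¹ ^ m) := by
  simp only [qInt, mul_comm 2 m, pow_mul]
  ring

lemma qInt_add_of_pow_eq_one {v : ℂ} {ℓ : ℕ} (hv : v ^ ℓ = 1) (m : ℕ) :
    qInt v (ℓ + m) = qInt v m := by
  simp only [qInt, pow_add, inv_pow, hv, inv_one, one_mul]

lemma qInt_eq_neg_of_add_eq {v : ℂ} {ℓ i j : ℕ} (hv : v ^ ℓ = 1) (hij : i + j = ℓ) :
    qInt v i = -qInt v j := by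
  have hprod : v ^ i * v ^ j = 1 := by rw [← pow_add, hij, hv]
  simp only [qInt, inv_pow, inv_eq_of_mul_eq_one_right hprod, inv_eq_of_mul_eq_one_left hprod]
  ring

lemma pow_two_mul_eq_one_of_qInt_eq_zero {q : ℂ} {m : ℕ} (hq : q ≠ 0) (h : qInt q m = 0) :
    q ^ (2 * m) = 1 := by
  have hpow : ∀ n : ℕ, q ^ n - q⁻¹ ^ n = 0 → q ^ (2 * n) = 1 := fun n hn => by
    rw [two_mul, pow_add]
    nth_rw 2 [sub_eq_zero.mp hn]
    rw [inv_pow, mul_inv_cancel₀ (pow_ne_zero n hq)]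
  rcases div_eq_zero_iff.mp h with hm | h1
  · exact hpow m hm
  · rw [pow_mul, (by simpa using hpow 1 (by simpa using h1) : q ^ 2 = 1), one_pow]

lemma qInt_ne_zero_of_isPrimitiveRoot {v : ℂ} {ℓ m : ℕ} (hv : IsPrimitiveRoot v ℓ)
    (hodd : Odd ℓ) (hm : ¬ ℓ ∣ m) : qInt v m ≠ 0 := fun h => by
  have h2m := pow_two_mul_eq_one_of_qInt_eq_zero (hv.ne_zero hodd.pos.ne') h
  exact hm ((Nat.Coprime.dvd_mul_left (Nat.coprime_two_right.mpr hodd)).mp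
    ((hv.pow_eq_one_iff_dvd _).mp h2m))

lemma eventually_qInt_ne_zero {m : ℕ} (hm : m ≠ 0) (v : ℂ) :
    ∀ᶠ q in 𝓝[≠] v, qInt q m ≠ 0 := by
  have hfin : {q : ℂ | qInt q m = 0}.Finite := by
    refine ((Polynomial.nthRootsFinset (2 * m) (1 : ℂ)).finite_toSet.insert 0).subset ?_
    intro q hq
    by_cases hq0 : q = 0
    · exact Or.inl hq0
    · exact Or.inr ((Polynomial.mem_nthRootsFinset (by omega) 1).mpr
        (pow_two_mul_eq_one_of_qInt_eq_zero hq0 hq))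
  exact nhdsNE_le_cofinite v hfin.compl_mem_cofinite

lemma continuousAt_qInt {v : ℂ} (hv : v - v⁻¹ ≠ 0) (m : ℕ) :
    ContinuousAt (fun q => qInt q m) v := by
  have hv0 : v ≠ 0 := by rintro rfl; simp at hv
  unfold qInt
  fun_prop (disch := assumption)

noncomputable def qDProd (q : ℂ) (a n : ℕ) : ℂ := ∏ i ∈ range n, qInt q (a + 2 * i)

lemma qDProd_succ (q : ℂ) (a n : ℕ) : qDProd q a (n + 1) = qDProd q a n * qInt q (a + 2 * n) :=
  prod_range_succ _ _

lemma qDProd_add (q : ℂ) (a m n : ℕ) :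
    qDProd q a (m + n) = qDProd q a m * qDProd q (a + 2 * m) n := by
  simp only [qDProd, prod_range_add, mul_add, add_assoc]

lemma qDFact_two_mul_add_one (q : ℂ) (k : ℕ) : qDFact q (2 * k + 1) = qDProd q 1 (k + 1) := by
  rw [qDFact, qDProd, show (2 * k + 1 + 1) / 2 = k + 1 by omega,
    ← prod_range_reflect _ (k + 1)]
  refine prod_congr rfl fun r hr => ?_
  rw [mem_range] at hr
  congr 1
  omega

lemma qDFact_two_mul (q : ℂ) (k : ℕ) : qDFact q (2 * k) = qDProd q 2 k := by
  rw [qDFact, qDProd, show (2 * k + 1) / 2 = k by omega, ← prod_range_reflect _ k]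
  refine prod_congr rfl fun r hr => ?_
  rw [mem_range] at hr
  congr 1
  omega

lemma qDProd_add_of_pow_eq_one {v : ℂ} {ℓ : ℕ} (hv : v ^ ℓ = 1) (a n : ℕ) :
    qDProd v (ℓ + a) n = qDProd v a n := by
  simp only [qDProd, add_assoc, qInt_add_of_pow_eq_one hv]

lemma qDProd_two_eq_neg_one_pow_mul {v : ℂ} {k : ℕ} (hv : v ^ (2 * k + 1) = 1) :
    qDProd v 2 k = (-1) ^ k * qDProd v 1 k := by
  rw [qDProd, qDProd, ← prod_range_reflect (fun i => qInt v (1 + 2 * i)) k,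
    show (-1 : ℂ) ^ k = (-1) ^ #(range k) by rw [card_range], ← prod_neg]
  refine prod_congr rfl fun r hr => ?_
  rw [mem_range] at hr
  exact qInt_eq_neg_of_add_eq hv (by omega)

lemma qDProd_ne_zero_of_isPrimitiveRoot {v : ℂ} {ℓ : ℕ} (hv : IsPrimitiveRoot v ℓ)
    (hodd : Odd ℓ) {a n : ℕ} (h : ∀ i < n, ¬ ℓ ∣ a + 2 * i) : qDProd v a n ≠ 0 :=
  prod_ne_zero_iff.mpr fun i hi => qInt_ne_zero_of_isPrimitiveRoot hv hodd (h i (mem_range.mp hi))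

lemma continuousAt_qDProd {v : ℂ} (hv : v - v⁻¹ ≠ 0) (a n : ℕ) :
    ContinuousAt (fun q => qDProd q a n) v :=
  tendsto_finsetProd _ fun _ _ => continuousAt_qInt hv _

lemma sub_inv_ne_zero_of_isPrimitiveRoot {v : ℂ} {ℓ : ℕ} (hv : IsPrimitiveRoot v ℓ)
    (hodd : Odd ℓ) (hℓ : ℓ ≠ 1) : v - v⁻¹ ≠ 0 := fun h =>
  qInt_ne_zero_of_isPrimitiveRoot hv hodd (m := 1) (by rwa [Nat.dvd_one]) (by simp [qInt, h])

noncomputable def reducedDenom (q : ℂ) (k : ℕ) : ℂ :=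
  qDProd q (2 * k + 3) k * qDProd q 2 k * qDProd q (2 * k + 2) k *
    (q ^ (2 * k + 1) + q⁻¹ ^ (2 * k + 1))

noncomputable def reducedRatio (q : ℂ) (k : ℕ) : ℂ := -qDProd q 1 k ^ 3 / reducedDenom q k

lemma qDFact_ratio_eq_reducedRatio {q : ℂ} {k : ℕ} (hk : 1 ≤ k) (hℓ : qDFact q (2 * k + 1) ≠ 0) :
    (-1 : ℂ) ^ (2 * k + 1) * (qDFact q (2 * k + 1) * qDFact q (2 * k + 1 - 2)) ^ 2 /
      (qDFact q (2 * (2 * k + 1) - 1) * qDFact q (2 * (2 * k + 1))) = reducedRatio q k := by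
  have hℓ2 : qDFact q (2 * k + 1 - 2) = qDProd q 1 k := by
    rw [show 2 * k + 1 - 2 = 2 * (k - 1) + 1 by omega, qDFact_two_mul_add_one,
      Nat.sub_add_cancel hk]
  have h2ℓ1 : qDFact q (2 * (2 * k + 1) - 1) =
      qDProd q 1 k * qInt q (2 * k + 1) * qDProd q (2 * k + 3) k := by
    rw [show 2 * (2 * k + 1) - 1 = 2 * (k + k) + 1 by omega, qDFact_two_mul_add_one,
      add_right_comm, qDProd_add, qDProd_succ]
    ring_nf
  have h2ℓ : qDFact q (2 * (2 * k + 1)) = qDProd q 2 k * qDProd q (2 * k + 2) k *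
      (qInt q (2 * k + 1) * (q ^ (2 * k + 1) + q⁻¹ ^ (2 * k + 1))) := by
    rw [qDFact_two_mul, ← qInt_two_mul]
    conv_lhs => rw [show 2 * k + 1 = k + k + 1 by omega, qDProd_succ, qDProd_add]
    ring_nf
  rw [qDFact_two_mul_add_one, qDProd_succ, add_comm 1] at hℓ ⊢
  rw [hℓ2, h2ℓ1, h2ℓ, Odd.neg_one_pow ⟨k, rfl⟩]
  conv_rhs => rw [reducedRatio, reducedDenom,
    ← mul_div_mul_left _ _ (mul_ne_zero hℓ (right_ne_zero_of_mul hℓ))]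
  congr 1 <;> ring

lemma reducedDenom_eq_of_pow_eq_one {v : ℂ} {k : ℕ} (hv : v ^ (2 * k + 1) = 1) :
    reducedDenom v k = 2 * qDProd v 1 k ^ 3 := by
  have hsq : ((-1 : ℂ) ^ k) ^ 2 = 1 := by rw [← pow_mul, pow_mul', neg_one_sq, one_pow]
  rw [reducedDenom, show 2 * k + 3 = 2 * k + 1 + 2 by omega,
    show 2 * k + 2 = 2 * k + 1 + 1 by omega, qDProd_add_of_pow_eq_one hv,
    qDProd_add_of_pow_eq_one hv, qDProd_two_eq_neg_one_pow_mul hv, inv_pow, hv, inv_one]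
  linear_combination 2 * qDProd v 1 k ^ 3 * hsq

lemma continuousAt_reducedDenom {v : ℂ} (hv : v - v⁻¹ ≠ 0) (k : ℕ) :
    ContinuousAt (fun q => reducedDenom q k) v := by
  have hv0 : v ≠ 0 := by rintro rfl; simp at hv
  exact ((continuousAt_qDProd hv _ _).mul (continuousAt_qDProd hv _ _)).mul
    (continuousAt_qDProd hv _ _) |>.mul (by fun_prop (disch := assumption))

lemma eventually_qDFact_ne_zero (m : ℕ) (v : ℂ) : ∀ᶠ q in 𝓝[≠] v, qDFact q m ≠ 0 := by
  have h := (eventually_all_finset (range ((m + 1) / 2))).mpr fun r hr =>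
    eventually_qInt_ne_zero (m := m - 2 * r) (by have := mem_range.mp hr; omega) v
  exact h.mono fun q hq => prod_ne_zero_iff.mpr hq

lemma tendsto_reducedRatio {v : ℂ} {k : ℕ} (hv : IsPrimitiveRoot v (2 * k + 1)) (hk : 1 ≤ k) :
    Tendsto (fun q => reducedRatio q k) (𝓝 v) (𝓝 (-1 / 2)) := by
  have hodd : Odd (2 * k + 1) := odd_two_mul_add_one k
  have hvt := sub_inv_ne_zero_of_isPrimitiveRoot hv hodd (by omega)
  have hA : qDProd v 1 k ≠ 0 := qDProd_ne_zero_of_isPrimitiveRoot hv hodd fun i hi h => by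
    have := Nat.le_of_dvd (by omega) h
    omega
  have hD := reducedDenom_eq_of_pow_eq_one hv.pow_eq_one
  have hD0 : reducedDenom v k ≠ 0 := by rw [hD]; exact mul_ne_zero two_ne_zero (pow_ne_zero 3 hA)
  have hval : reducedRatio v k = -1 / 2 := by
    rw [reducedRatio, hD]
    field_simp
  exact hval ▸ (((continuousAt_qDProd hvt 1 k).pow 3).neg.div
    (continuousAt_reducedDenom hvt k) hD0).tendsto

/-- The evaluation from the proof of Proposition 7.5 of the paper: for an odd `ℓ ≥ 3`
and a primitive `ℓ`-th root of unity `v`, the function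
`q ↦ (-1)^ℓ ([ℓ]_q!! [ℓ-2]_q!!)² / ([2ℓ-1]_q!! [2ℓ]_q!!)` tends to `-1/2`
as `q → v`, `q ≠ v`. -/
theorem qDFact_ratio_tendsto (ℓ : ℕ) (hodd : Odd ℓ) (hl : 3 ≤ ℓ) (v : ℂ)
    (hv : IsPrimitiveRoot v ℓ) :
    Tendsto
      (fun q : ℂ =>
        ((-1 : ℂ) ^ ℓ * (qDFact q ℓ * qDFact q (ℓ - 2)) ^ 2) /
          (qDFact q (2 * ℓ - 1) * qDFact q (2 * ℓ)))
      (𝓝[≠] v) (𝓝 (-1 / 2)) := by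
  obtain ⟨k, rfl⟩ := hodd
  have hk : 1 ≤ k := by omega
  refine ((tendsto_reducedRatio hv hk).mono_left nhdsWithin_le_nhds).congr' ?_
  filter_upwards [eventually_qDFact_ne_zero (2 * k + 1) v] with q hq
  exact (qDFact_ratio_eq_reducedRatio hk hq).symm
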